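/- arXiv:1504.04806 — 2 statements merged into one kernel-verified Lean document; each statement's English description precedes it below -/
import Mathlib

section
/- Let D be an ICC digraph with inner vertex set V_I = {v^1_{n_1}, …, v^k_{n_k}} (the last vertices of the k disjoint paths). Then for every ordered pair (i, j) of distinct inner vertices there is exactly one P-path from i to j in D, where a P-path is a directed path whose first and last vertices are two distinct vertices of V_I and all of whose other vertices lie outside V_I. -/
open Finset

/-- A digraph: a finite vertex set together with an arc set with no self-loops. -/
structure Digr (V : Type) where
  verts : Finset V
  arcs : Finset (V × V)
  arcs_sub : ∀ a ∈ arcs, a.1 ∈ verts ∧ a.2 ∈ verts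
  no_loops : ∀ a ∈ arcs, a.1 ≠ a.2

variable {V : Type} [DecidableEq V]

namespace Digr

/-- Out-neighborhood of `v`. -/
def outNbr (D : Digr V) (v : V) : Finset V :=
  (D.arcs.filter (fun a => a.1 = v)).image Prod.snd

/-- A directed path: a nonempty list of distinct vertices of `D` with an arc between
each consecutive pair. -/
def IsPath (D : Digr V) (p : List V) : Prop :=
  p ≠ [] ∧ p.Nodup ∧ (∀ v ∈ p, v ∈ D.verts) ∧ p.Chain' (fun u w => (u, w) ∈ D.arcs)

/-- A directed cycle: a directed path whose last vertex has an arc back to the first. -/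
def IsCycle (D : Digr V) (p : List V) : Prop :=
  D.IsPath p ∧ ∃ a b, p.head? = some a ∧ p.getLast? = some b ∧ (b, a) ∈ D.arcs

/-- An out-arborescence rooted at `r`: every vertex is reachable from the root by
exactly one directed path. -/
def IsOutArb (T : Digr V) (r : V) : Prop :=
  r ∈ T.verts ∧ ∀ v ∈ T.verts,
    ∃! p : List V, T.IsPath p ∧ p.head? = some r ∧ p.getLast? = some v

/-- The leaves of a digraph: vertices with no out-neighbors. -/
def leaves (T : Digr V) : Finset V :=
  T.verts.filter (fun v => T.outNbr v = ∅)

/-- `T` is a sub-digraph of `D`. -/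
def Sub (T D : Digr V) : Prop :=
  T.verts ⊆ D.verts ∧ T.arcs ⊆ D.arcs

/-- A P-path from `i` to `j` (w.r.t. inner vertex set `VI`): a directed path whose first
and last vertices are the distinct inner vertices `i` and `j` and all of whose other
vertices lie outside `VI`. -/
def IsPPathFromTo (D : Digr V) (VI : Finset V) (i j : V) (p : List V) : Prop :=
  D.IsPath p ∧ p.head? = some i ∧ p.getLast? = some j ∧ i ∈ VI ∧ j ∈ VI ∧ i ≠ j ∧
    ∀ v ∈ (p.drop 1).dropLast, v ∉ VI

/-- `D` is a GIC digraph with inner vertex set `VI` and out-arborescences `T i` (`i ∈ VI`):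
each `T i` is a sub-digraph of `D` that is an out-arborescence rooted at `i` with leaf set
exactly `VI \ {i}`; `D` is the union of the `T i`; `D` has no I-cycle (no directed cycle
containing exactly one inner vertex); and for every ordered pair of distinct inner vertices
there is exactly one P-path between them. -/
def IsGIC (D : Digr V) (VI : Finset V) (T : V → Digr V) : Prop :=
  VI ⊆ D.verts ∧
  (∀ i ∈ VI, (T i).Sub D ∧ (T i).IsOutArb i ∧ (T i).leaves = VI.erase i) ∧
  D.verts = VI.biUnion (fun i => (T i).verts) ∧
  D.arcs = VI.biUnion (fun i => (T i).arcs) ∧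
  (∀ c : List V, D.IsCycle c → (c.toFinset ∩ VI).card ≠ 1) ∧
  (∀ i ∈ VI, ∀ j ∈ VI, i ≠ j → ∃! p : List V, D.IsPPathFromTo VI i j p)

/-- The sub-digraph of `D` induced on `U`. -/
def induced (D : Digr V) (U : Finset V) : Digr V where
  verts := D.verts ∩ U
  arcs := D.arcs.filter (fun a => a.1 ∈ U ∧ a.2 ∈ U)
  arcs_sub := by
    intro a ha
    rw [Finset.mem_filter] at ha
    have h := D.arcs_sub a ha.1
    exact ⟨Finset.mem_inter.2 ⟨h.1, ha.2.1⟩, Finset.mem_inter.2 ⟨h.2, ha.2.2⟩⟩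
  no_loops := by
    intro a ha
    rw [Finset.mem_filter] at ha
    exact D.no_loops a ha.1

/-- A digraph is acyclic if it has no directed cycle. -/
def Acyclic (D : Digr V) : Prop := ∀ c : List V, ¬ D.IsCycle c

/-- The maximum number of vertices of an acyclic induced sub-digraph of `D`. -/
noncomputable def MAIS (D : Digr V) : ℕ :=
  letI := Classical.propDecidable
  ((D.verts.powerset).filter (fun U => (D.induced U).Acyclic)).sup Finset.card

end Digr

/-- A valid index code for `D`: an encoding map `F` such that every receiver `i ∈ V(D)`
can decode its message `x i` from `F x` and its side information `{x j : j ∈ N⁺_D(i)}`. -/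
def IsValidCode {M C : Type} (D : Digr V) (F : (V → M) → C) : Prop :=
  ∀ x x' : V → M, F x = F x' →
    ∀ i ∈ D.verts, (∀ j ∈ D.outNbr i, x j = x' j) → x i = x' i

/-- The set of arcs along a list of vertices (consecutive pairs). -/
def listArcs (p : List V) : Finset (V × V) := (p.zip p.tail).toFinset

/-- `D` is an ICC digraph with `k ≥ 2` vertex-disjoint directed paths `P i` (with first
vertex `firstv i` and last vertex `lastv i`), connecting paths with internal-vertex lists
`Q i j` ending at a vertex `tgt i j` of `P j`, all these vertex sets mutually disjoint and
together comprising `V(D)`, the arcs of `D` being exactly the arcs along these paths, and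
each first vertex having in-degree at least one. -/
structure IsICC (D : Digr V) (k : ℕ) (P : Fin k → List V)
    (Q : Fin k → Fin k → List V) (tgt : Fin k → Fin k → V)
    (firstv lastv : Fin k → V) : Prop where
  two_le : 2 ≤ k
  head_eq : ∀ i, (P i).head? = some (firstv i)
  last_eq : ∀ i, (P i).getLast? = some (lastv i)
  path_P : ∀ i, D.IsPath (P i)
  disj_P : ∀ i j, i ≠ j → ∀ v ∈ P i, v ∉ P j
  conn_path : ∀ i j, i ≠ j → D.IsPath (lastv i :: (Q i j ++ [tgt i j]))
  tgt_mem : ∀ i j, i ≠ j → tgt i j ∈ P j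
  disj_QP : ∀ i j, i ≠ j → ∀ v ∈ Q i j, ∀ m, v ∉ P m
  disj_QQ : ∀ i j i' j', i ≠ j → i' ≠ j' → (i, j) ≠ (i', j') → ∀ v ∈ Q i j, v ∉ Q i' j'
  verts_eq : D.verts = (Finset.univ.biUnion fun i => (P i).toFinset) ∪
      (Finset.univ.biUnion fun p : Fin k × Fin k =>
        if p.1 ≠ p.2 then (Q p.1 p.2).toFinset else ∅)
  arcs_eq : D.arcs = (Finset.univ.biUnion fun i => listArcs (P i)) ∪
      (Finset.univ.biUnion fun p : Fin k × Fin k =>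
        if p.1 ≠ p.2 then listArcs (lastv p.1 :: (Q p.1 p.2 ++ [tgt p.1 p.2])) else ∅)
  indeg : ∀ j, ∃ u ∈ D.verts, (u, firstv j) ∈ D.arcs

/-!
Every vertex other than the last vertices `lastv m` has exactly one out-neighbour, so a P-path
is determined by its first arc. The arcs leaving `lastv i` are exactly the first arcs of the
connecting paths `lastv i → Q i m → tgt i m`, and following such a path and then `P m` to its end
gives a P-path from `lastv i` to `lastv m`. Hence each P-path from `lastv i` is the one through
`Q i m` for the `m` at which it ends, and there is exactly one ending at `lastv j`.
-/

theorem mem_listArcs_iff {l : List V} {u w : V} :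
    (u, w) ∈ listArcs l ↔ ∃ n, l[n]? = some u ∧ l[n + 1]? = some w := by
  simp [listArcs, List.mem_iff_getElem?, List.getElem?_zip_eq_some]

theorem fst_mem_dropLast_of_mem_listArcs {l : List V} {u w : V} (h : (u, w) ∈ listArcs l) :
    u ∈ l.dropLast := by
  obtain ⟨n, hu, hw⟩ := mem_listArcs_iff.1 h
  have hn : n + 1 < l.length := (List.getElem?_eq_some_iff.1 hw).1
  exact List.mem_iff_getElem?.2 ⟨n, by rw [List.getElem?_dropLast, if_pos (by omega), hu]⟩

theorem eq_of_mem_listArcs_of_nodup {l : List V} (hl : l.Nodup) {u w w' : V}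
    (h : (u, w) ∈ listArcs l) (h' : (u, w') ∈ listArcs l) : w = w' := by
  obtain ⟨n, hu, hw⟩ := mem_listArcs_iff.1 h
  obtain ⟨n', hu', hw'⟩ := mem_listArcs_iff.1 h'
  have hn : n < l.length := (List.getElem?_eq_some_iff.1 hu).1
  obtain rfl : n = n' := (List.getElem?_inj hn hl).1 (hu.trans hu'.symm)
  exact Option.some.inj (hw.symm.trans hw')

theorem head?_eq_of_mem_listArcs_cons {a w : V} {l : List V} (hl : (a :: l).Nodup)
    (h : (a, w) ∈ listArcs (a :: l)) : l.head? = some w := by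
  obtain ⟨n, ha, hw⟩ := mem_listArcs_iff.1 h
  obtain rfl : n = 0 := (List.getElem?_inj (List.getElem?_eq_some_iff.1 ha).1 hl).1 ha
  simpa [List.head?_eq_getElem?] using hw

theorem List.Nodup.getLast_notMem_dropLast {α : Type*} {l : List α} {a : α} (hl : l.Nodup)
    (h : l.getLast? = some a) : a ∉ l.dropLast := by
  obtain ⟨l', rfl⟩ := List.getLast?_eq_some_iff.1 h
  rw [List.dropLast_concat]
  exact fun ha => (List.nodup_append.1 hl).2.2 a ha a (List.mem_singleton_self a) rfl

theorem List.eq_of_isChain_of_rightUnique {α : Type*} {R : α → α → Prop} {S : Set α}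
    (hR : ∀ v ∉ S, ∀ {w w'}, R v w → R v w' → w = w') :
    ∀ {l l' : List α}, l.head? = l'.head? → l.IsChain R → l'.IsChain R →
      (∀ v ∈ l.dropLast, v ∉ S) → (∀ v ∈ l'.dropLast, v ∉ S) →
      (∀ v ∈ l.getLast?, v ∈ S) → (∀ v ∈ l'.getLast?, v ∈ S) → l = l'
  | [], l', hhead, _, _, _, _, _, _ => (List.head?_eq_none_iff.1 hhead.symm).symm
  | [_], [], hhead, _, _, _, _, _, _ => by simp at hhead
  | [_], [_], hhead, _, _, _, _, _, _ => by simpa using hhead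
  | [a], _ :: b :: l', hhead, _, _, _, hint', hlast, _ => by
    obtain rfl : a = _ := by simpa using hhead
    exact absurd (hlast a rfl) (hint' a (by simp))
  | _ :: _ :: _, [], hhead, _, _, _, _, _, _ => by simp at hhead
  | a :: b :: l, [_], hhead, _, _, hint, _, _, hlast' => by
    obtain rfl : a = _ := by simpa using hhead
    exact absurd (hlast' a rfl) (hint a (by simp))
  | a :: b :: l, _ :: b' :: l', hhead, hc, hc', hint, hint', hlast, hlast' => by
    obtain rfl : a = _ := by simpa using hhead
    rw [List.isChain_cons_cons] at hc hc'
    obtain rfl : b = b' := hR a (hint a (by simp)) hc.1 hc'.1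
    rw [List.dropLast_cons_cons] at hint hint'
    rw [List.getLast?_cons_cons] at hlast hlast'
    have htail : b :: l = b :: l' := List.eq_of_isChain_of_rightUnique hR rfl hc.2 hc'.2
      (fun v hv => hint v (.tail _ hv)) (fun v hv => hint' v (.tail _ hv)) hlast hlast'
    rw [htail]

namespace Digr

variable {α : Type}

theorem IsPath.infix {D : Digr α} {l l' : List α} (hl : D.IsPath l) (hne : l' ≠ [])
    (h : l' <:+: l) : D.IsPath l' :=
  ⟨hne, hl.2.1.sublist h.sublist, fun v hv => hl.2.2.1 v (h.subset hv), hl.2.2.2.infix h⟩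

theorem IsPath.append {D : Digr α} {l₁ l₂ : List α} (h₁ : D.IsPath l₁) (h₂ : D.IsPath l₂)
    (hdisj : ∀ v ∈ l₁, v ∉ l₂) (hlink : ∀ x ∈ l₁.getLast?, ∀ y ∈ l₂.head?, (x, y) ∈ D.arcs) :
    D.IsPath (l₁ ++ l₂) := by
  refine ⟨by simp [h₁.1], ?_, ?_, h₁.2.2.2.append h₂.2.2.2 hlink⟩
  · exact List.nodup_append.2 ⟨h₁.2.1, h₂.2.1, fun a ha b hb hab => hdisj a ha (hab ▸ hb)⟩
  · simpa [or_imp, forall_and] using ⟨h₁.2.2.1, h₂.2.2.1⟩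

theorem IsPPathFromTo.eq_of_tail_head?_eq {D : Digr α} {VI : Finset α} {i j j' : α}
    {p p' : List α} (hD : ∀ v ∉ VI, ∀ {w w'}, (v, w) ∈ D.arcs → (v, w') ∈ D.arcs → w = w')
    (hp : D.IsPPathFromTo VI i j p) (hp' : D.IsPPathFromTo VI i j' p')
    (h : p.tail.head? = p'.tail.head?) : p = p' := by
  obtain ⟨⟨-, -, -, hc⟩, hhead, hlast, -, hj, -, hint⟩ := hp
  obtain ⟨⟨-, -, -, hc'⟩, hhead', hlast', -, hj', -, hint'⟩ := hp'
  obtain ⟨t, rfl⟩ := List.head?_eq_some_iff.1 hhead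
  obtain ⟨t', rfl⟩ := List.head?_eq_some_iff.1 hhead'
  have hend : ∀ {t : List α} {j : α}, (i :: t).getLast? = some j → j ∈ VI →
      ∀ v ∈ t.getLast?, v ∈ (VI : Set α) := by
    intro t j hl hj v hv
    rw [List.getLast?_cons, hv, Option.getD_some, Option.some_inj] at hl
    exact hl ▸ hj
  congr 1
  exact List.eq_of_isChain_of_rightUnique (S := (VI : Set α)) hD h hc.tail hc'.tail hint hint'
    (hend hlast hj) (hend hlast' hj')

theorem IsPPathFromTo.exists_first_arc {D : Digr α} {VI : Finset α} {i j : α} {p : List α}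
    (hp : D.IsPPathFromTo VI i j p) : ∃ w, (i, w) ∈ D.arcs ∧ p.tail.head? = some w := by
  obtain ⟨⟨-, -, -, hc⟩, hhead, hlast, -, -, hij, -⟩ := hp
  obtain ⟨t, rfl⟩ := List.head?_eq_some_iff.1 hhead
  cases t with
  | nil => exact absurd (Option.some_inj.1 hlast) hij
  | cons w t => exact ⟨w, (List.isChain_cons_cons.1 hc).1, rfl⟩

end Digr

namespace IsICC

variable {D : Digr V} {k : ℕ} {P : Fin k → List V} {Q : Fin k → Fin k → List V}
  {tgt : Fin k → Fin k → V} {firstv lastv : Fin k → V}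

theorem lastv_mem (h : IsICC D k P Q tgt firstv lastv) (m : Fin k) : lastv m ∈ P m :=
  List.mem_of_getLast? (h.last_eq m)

theorem lastv_injective (h : IsICC D k P Q tgt firstv lastv) : Function.Injective lastv :=
  fun m m' hmm' => of_not_not fun hne => h.disj_P m m' hne _ (h.lastv_mem m) (hmm' ▸ h.lastv_mem m')

theorem notMem_image_lastv_of_mem_Q (h : IsICC D k P Q tgt firstv lastv) {m n : Fin k}
    (hmn : m ≠ n) {v : V} (hv : v ∈ Q m n) : v ∉ univ.image lastv := by
  simp only [mem_image, mem_univ, true_and, not_exists]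
  rintro m' rfl
  exact h.disj_QP m n hmn _ hv m' (h.lastv_mem m')

theorem notMem_image_lastv_of_mem_dropLast (h : IsICC D k P Q tgt firstv lastv) {m : Fin k}
    {v : V} (hv : v ∈ (P m).dropLast) : v ∉ univ.image lastv := by
  simp only [mem_image, mem_univ, true_and, not_exists]
  rintro m' rfl
  obtain rfl : m' = m := of_not_not fun hne =>
    h.disj_P m' m hne _ (h.lastv_mem m') ((P m).dropLast_subset hv)
  exact (h.path_P m').2.1.getLast_notMem_dropLast (h.last_eq m') hv

theorem mem_arcs_iff (h : IsICC D k P Q tgt firstv lastv) {u w : V} :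
    (u, w) ∈ D.arcs ↔ (∃ m, (u, w) ∈ listArcs (P m)) ∨
      ∃ m n, m ≠ n ∧ (u, w) ∈ listArcs (lastv m :: (Q m n ++ [tgt m n])) := by
  rw [h.arcs_eq]
  simp only [mem_union, mem_biUnion, mem_univ, true_and, Prod.exists]
  refine or_congr Iff.rfl (exists₂_congr fun m n => ?_)
  split_ifs with hmn <;> simp [hmn]

theorem mem_Q_of_mem_listArcs_conn {m n : Fin k} {v w : V} (hv : v ∉ univ.image lastv)
    (hvw : (v, w) ∈ listArcs (lastv m :: (Q m n ++ [tgt m n]))) : v ∈ Q m n := by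
  have hd := fst_mem_dropLast_of_mem_listArcs hvw
  rw [← List.cons_append, List.dropLast_concat, List.mem_cons] at hd
  exact hd.resolve_left (by rintro rfl; exact hv (mem_image_of_mem _ (mem_univ m)))

theorem arc_right_unique (h : IsICC D k P Q tgt firstv lastv) :
    ∀ v ∉ univ.image lastv, ∀ {w w'}, (v, w) ∈ D.arcs → (v, w') ∈ D.arcs → w = w' := by
  intro v hv w w' hw hw'
  rw [h.mem_arcs_iff] at hw hw'
  rcases hw with ⟨m, hm⟩ | ⟨m, n, hmn, hm⟩ <;> rcases hw' with ⟨m', hm'⟩ | ⟨m', n', hmn', hm'⟩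
  · have hvm := (P m).dropLast_subset (fst_mem_dropLast_of_mem_listArcs hm)
    have hvm' := (P m').dropLast_subset (fst_mem_dropLast_of_mem_listArcs hm')
    obtain rfl : m = m' := of_not_not fun hne => h.disj_P m m' hne v hvm hvm'
    exact eq_of_mem_listArcs_of_nodup (h.path_P m).2.1 hm hm'
  · exact absurd ((P m).dropLast_subset (fst_mem_dropLast_of_mem_listArcs hm))
      (h.disj_QP m' n' hmn' v (mem_Q_of_mem_listArcs_conn hv hm') m)
  · exact absurd ((P m').dropLast_subset (fst_mem_dropLast_of_mem_listArcs hm'))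
      (h.disj_QP m n hmn v (mem_Q_of_mem_listArcs_conn hv hm) m')
  · obtain ⟨rfl, rfl⟩ : m = m' ∧ n = n' := Prod.mk_inj.1 <| of_not_not fun hne =>
      h.disj_QQ m n m' n' hmn hmn' hne v (mem_Q_of_mem_listArcs_conn hv hm)
        (mem_Q_of_mem_listArcs_conn hv hm')
    exact eq_of_mem_listArcs_of_nodup (h.conn_path m n hmn).2.1 hm hm'

theorem exists_head?_eq_of_arc_lastv (h : IsICC D k P Q tgt firstv lastv) {i : Fin k} {w : V}
    (hw : (lastv i, w) ∈ D.arcs) : ∃ m, i ≠ m ∧ (Q i m ++ [tgt i m]).head? = some w := by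
  have hi : lastv i ∈ univ.image lastv := mem_image_of_mem _ (mem_univ i)
  rcases h.mem_arcs_iff.1 hw with ⟨m, hm⟩ | ⟨m, n, hmn, hm⟩
  · exact absurd hi (h.notMem_image_lastv_of_mem_dropLast (fst_mem_dropLast_of_mem_listArcs hm))
  · have hd := fst_mem_dropLast_of_mem_listArcs hm
    rw [← List.cons_append, List.dropLast_concat, List.mem_cons] at hd
    obtain rfl : i = m := h.lastv_injective (hd.resolve_right
      fun hQ => h.notMem_image_lastv_of_mem_Q hmn hQ hi)
    exact ⟨n, hmn, head?_eq_of_mem_listArcs_cons (h.conn_path i n hmn).2.1 hm⟩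

/-- The witness follows `Q i m` into `P m` at `tgt i m` and then `P m` to its end. -/
theorem exists_isPPathFromTo (h : IsICC D k P Q tgt firstv lastv) {i m : Fin k} (hne : i ≠ m) :
    ∃ p, D.IsPPathFromTo (univ.image lastv) (lastv i) (lastv m) p ∧
      p.tail.head? = (Q i m ++ [tgt i m]).head? := by
  obtain ⟨s, t, hPm⟩ := List.append_of_mem (h.tgt_mem i m hne)
  have hconn := h.conn_path i m hne
  rw [← List.cons_append] at hconn
  have hsuffix : tgt i m :: t <:+ P m := ⟨s, hPm.symm⟩
  have hlast : (tgt i m :: t).getLast? = some (lastv m) := by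
    rw [← h.last_eq m, hPm, List.getLast?_append, List.getLast?_cons]; rfl
  refine ⟨(lastv i :: Q i m) ++ tgt i m :: t, ⟨?_, rfl, ?_, mem_image_of_mem _ (mem_univ i),
    mem_image_of_mem _ (mem_univ m), h.lastv_injective.ne hne, ?_⟩, by cases Q i m <;> rfl⟩
  · refine (hconn.infix (by simp) (List.prefix_append _ _).isInfix).append
      ((h.path_P m).infix (by simp) hsuffix.isInfix) ?_ (List.isChain_append.1 hconn.2.2.2).2.2
    rintro v hv hvt
    have hvm := hsuffix.subset hvt
    rcases List.mem_cons.1 hv with rfl | hvQ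
    · exact h.disj_P i m hne _ (h.lastv_mem i) hvm
    · exact h.disj_QP i m hne v hvQ m hvm
  · rw [List.getLast?_append, hlast]; rfl
  · rw [List.cons_append, List.drop_one, List.tail_cons, List.dropLast_append_of_ne_nil (by simp)]
    intro v hv
    rcases List.mem_append.1 hv with hvQ | hvt
    · exact h.notMem_image_lastv_of_mem_Q hne hvQ
    · refine h.notMem_image_lastv_of_mem_dropLast (m := m) ?_
      rw [hPm, List.dropLast_append_of_ne_nil (by simp)]
      exact List.mem_append_right _ hvt

end IsICC

/-- In an ICC digraph, for every ordered pair of distinct inner vertices (the last vertices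
of the `k` disjoint paths) there is exactly one P-path from the first to the second. -/
theorem stmt10 (D : Digr V) (k : ℕ) (P : Fin k → List V)
    (Q : Fin k → Fin k → List V) (tgt : Fin k → Fin k → V)
    (firstv lastv : Fin k → V)
    (hICC : IsICC D k P Q tgt firstv lastv)
    (i j : Fin k) (hij : i ≠ j) :
    ∃! p : List V,
      D.IsPPathFromTo (Finset.univ.image lastv) (lastv i) (lastv j) p := by
  obtain ⟨p, hp, hp_second⟩ := hICC.exists_isPPathFromTo hij
  refine ⟨p, hp, fun q hq => ?_⟩
  obtain ⟨w, hw, hq_second⟩ := hq.exists_first_arc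
  obtain ⟨m, hm, hm_second⟩ := hICC.exists_head?_eq_of_arc_lastv hw
  obtain ⟨p', hp', hp'_second⟩ := hICC.exists_isPPathFromTo hm
  obtain rfl : q = p' := hq.eq_of_tail_head?_eq hICC.arc_right_unique hp'
    (hq_second.trans (hp'_second.trans hm_second).symm)
  obtain rfl : m = j := hICC.lastv_injective (Option.some_inj.1 (hp'.2.2.1.symm.trans hq.2.2.1))
  exact hq.eq_of_tail_head?_eq hICC.arc_right_unique hp
    (hq_second.trans (hp_second.trans hm_second).symm)
end

section
/- (Theorem 2) Every ICC digraph D is a k-GIC digraph with inner vertex set V_I = {v^1_{n_1}, …, v^k_{n_k}} (the last vertices of the k disjoint paths): there exist out-arborescences T_i ⊆ D rooted at each i ∈ V_I with leaf set exactly V_I \ {i} whose union is D, D contains no I-cycle, and for every ordered pair of distinct inner vertices there is exactly one P-path between them. -/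
open Finset

variable {V : Type} [DecidableEq V]

/-!
Every vertex outside `V_I = {lastv i}` has out-degree one, and the arcs leaving `lastv i` start
the connections to the other paths. Hence a walk leaving `lastv i` towards `P j` is forced along
the connection and then along `P j` up to `lastv j`: this branch is the only P-path from `lastv i`
to `lastv j`, and `T_i` is the union of the branches from `lastv i`. An I-cycle through `lastv i`
would be forced along a branch into a second inner vertex. Each `P j` is entered at its first
vertex by some connection (the in-degree condition), so the trees cover `D`.
-/

section ListArcs

variable {l L : List V} {x y : V}

theorem listArcs_cons_cons (a b : V) (l : List V) :
    listArcs (a :: b :: l) = insert (a, b) (listArcs (b :: l)) := by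
  simp [listArcs]

theorem mem_listArcs_iff_s11 : (x, y) ∈ listArcs l ↔ ∃ l₁ l₂, l = l₁ ++ x :: y :: l₂ := by
  induction l using List.twoStepInduction with
  | nil => simp [listArcs]
  | singleton a =>
    simp only [listArcs, List.tail_cons, List.zip_nil_right, List.toFinset_nil,
      Finset.notMem_empty, false_iff, not_exists]
    intro l₁ l₂ h
    have := congrArg List.length h
    simp only [List.length_cons, List.length_nil, List.length_append] at this
    omega
  | cons_cons a b t _ ih =>
    rw [listArcs_cons_cons, Finset.mem_insert, ih, Prod.mk.injEq]
    constructor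
    · rintro (⟨rfl, rfl⟩ | ⟨l₁, l₂, h⟩)
      · exact ⟨[], t, rfl⟩
      · exact ⟨a :: l₁, l₂, by rw [h, List.cons_append]⟩
    · rintro ⟨_ | ⟨c, l₁⟩, l₂, h⟩
      · simp only [List.nil_append, List.cons.injEq] at h
        exact Or.inl ⟨h.1.symm, h.2.1.symm⟩
      · simp only [List.cons_append, List.cons.injEq] at h
        exact Or.inr ⟨l₁, l₂, h.2⟩

theorem mem_listArcs_cons {a : V} :
    (x, y) ∈ listArcs (a :: l) ↔ x = a ∧ l.head? = some y ∨ (x, y) ∈ listArcs l := by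
  cases l with
  | nil => simp [listArcs]
  | cons b l => simp [listArcs_cons_cons, eq_comm]

theorem listArcs_subset_of_isInfix (h : l <:+: L) : listArcs l ⊆ listArcs L := by
  obtain ⟨s, t, rfl⟩ := h
  intro ⟨x, y⟩ hxy
  obtain ⟨l₁, l₂, rfl⟩ := mem_listArcs_iff_s11.1 hxy
  exact mem_listArcs_iff_s11.2 ⟨s ++ l₁, l₂ ++ t, by simp⟩

theorem fst_mem_dropLast_of_mem_listArcs_s11 (h : (x, y) ∈ listArcs l) : x ∈ l.dropLast := by
  obtain ⟨l₁, l₂, rfl⟩ := mem_listArcs_iff_s11.1 h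
  simp [List.dropLast_append_of_ne_nil]

theorem snd_mem_tail_of_mem_listArcs (h : (x, y) ∈ listArcs l) : y ∈ l.tail := by
  obtain ⟨l₁, l₂, rfl⟩ := mem_listArcs_iff_s11.1 h
  cases l₁ <;> simp

theorem fst_mem_of_mem_listArcs (h : (x, y) ∈ listArcs l) : x ∈ l :=
  List.mem_of_mem_dropLast (fst_mem_dropLast_of_mem_listArcs_s11 h)

theorem snd_mem_of_mem_listArcs (h : (x, y) ∈ listArcs l) : y ∈ l :=
  List.mem_of_mem_tail (snd_mem_tail_of_mem_listArcs h)

theorem exists_mem_listArcs_of_mem_dropLast (h : x ∈ l.dropLast) : ∃ y, (x, y) ∈ listArcs l := by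
  obtain ⟨s, t, hst⟩ := List.append_of_mem h
  have hl : l ≠ [] := by rintro rfl; simp at h
  obtain ⟨y, r, hyr⟩ : ∃ y r, t ++ [l.getLast hl] = y :: r := List.exists_cons_of_ne_nil (by simp)
  refine ⟨y, mem_listArcs_iff_s11.2 ⟨s, r, ?_⟩⟩
  rw [← List.dropLast_append_getLast hl, hst, ← hyr]
  simp

theorem listArcs_append_cons (l r : List V) (a : V) :
    listArcs (l ++ a :: r) = listArcs (l ++ [a]) ∪ listArcs (a :: r) := by
  induction l using List.twoStepInduction with
  | nil => simp [listArcs]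
  | singleton b => simp [listArcs]
  | cons_cons b c t _ ih =>
    change listArcs (b :: c :: (t ++ a :: r)) = listArcs (b :: c :: (t ++ [a])) ∪ _
    rw [listArcs_cons_cons, listArcs_cons_cons, ← List.cons_append, ← List.cons_append, ih,
      Finset.insert_union]

theorem isChain_mem_listArcs (l : List V) : l.IsChain (fun u w => (u, w) ∈ listArcs l) :=
  List.isChain_iff_forall_rel_of_append_cons_cons.2 fun _ _ _ _ h => mem_listArcs_iff_s11.2 ⟨_, _, h⟩

theorem List.IsChain.prefix_or_prefix_of_forced {R : V → V → Prop} {p L : List V}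
    (hL : L.Nodup) (hforced : ∀ x ∈ L.dropLast, ∀ y, R x y → (x, y) ∈ listArcs L)
    (hp : p.IsChain R) (hhead : p.head? = L.head?) : p <+: L ∨ L <+: p := by
  induction p generalizing L with
  | nil => exact Or.inl List.nil_prefix
  | cons a q ih =>
    obtain ⟨M, rfl⟩ : ∃ M, L = a :: M := by
      cases L with
      | nil => simp at hhead
      | cons b M => simp only [List.head?_cons, Option.some.injEq] at hhead; exact ⟨M, hhead ▸ rfl⟩
    rcases q with _ | ⟨b, r⟩
    · exact Or.inl (List.prefix_cons_inj a |>.2 List.nil_prefix)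
    rcases M with _ | ⟨c, M⟩
    · exact Or.inr (List.prefix_cons_inj a |>.2 List.nil_prefix)
    have ha : a ∉ c :: M := (List.nodup_cons.1 hL).1
    have hbc : b = c := by
      have := hforced a (by simp) b (List.isChain_cons_cons.1 hp).1
      rw [listArcs_cons_cons, Finset.mem_insert, Prod.mk.injEq] at this
      exact this.elim (·.2) fun h => absurd (fst_mem_of_mem_listArcs h) ha
    subst hbc
    have hforced' : ∀ x ∈ (b :: M).dropLast, ∀ y, R x y → (x, y) ∈ listArcs (b :: M) := by
      intro x hx y hxy
      have := hforced x (by rw [List.dropLast_cons_of_ne_nil (by simp)]; exact .tail _ hx) y hxy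
      rw [listArcs_cons_cons, Finset.mem_insert, Prod.mk.injEq] at this
      exact this.resolve_left fun h => ha (h.1 ▸ List.mem_of_mem_dropLast hx)
    simpa only [List.prefix_cons_inj] using
      ih (List.nodup_cons.1 hL).2 hforced' (List.isChain_cons_cons.1 hp).2 rfl

theorem mem_listArcs_of_isSuffix {s L : List V} {x y : V} (hL : L.Nodup) (hs : s <:+ L)
    (hx : x ∈ s) (hxy : (x, y) ∈ listArcs L) : (x, y) ∈ listArcs s := by
  obtain ⟨pre, rfl⟩ := hs
  obtain ⟨a, r, rfl⟩ := List.exists_cons_of_ne_nil (List.ne_nil_of_mem hx)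
  rw [listArcs_append_cons, Finset.mem_union] at hxy
  refine hxy.resolve_left fun h => List.disjoint_of_nodup_append hL ?_ hx
  simpa using fst_mem_dropLast_of_mem_listArcs_s11 h

end ListArcs

section Lists

variable {α : Type*}

theorem List.Nodup.not_mem_dropLast_of_getLast? {l : List α} {x : α} (hl : l.Nodup)
    (hx : l.getLast? = some x) : x ∉ l.dropLast := by
  obtain ⟨l', rfl⟩ := List.getLast?_eq_some_iff.1 hx
  rw [List.dropLast_concat]
  exact fun h => List.disjoint_of_nodup_append hl h (List.mem_singleton_self x)

theorem List.Nodup.eq_of_isPrefix_of_getLast?_eq {l L : List α} (hL : L.Nodup) (h : l <+: L)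
    (hlast : l.getLast? = L.getLast?) : l = L := by
  obtain ⟨r, rfl⟩ := h
  rcases List.eq_nil_or_concat r with rfl | ⟨r', z, rfl⟩
  · exact (List.append_nil l).symm
  · rw [List.concat_eq_append] at hL hlast
    have hz : l.getLast? = some z := by simpa [← List.append_assoc] using hlast
    exact absurd (List.mem_append_right r' (List.mem_singleton_self z))
      (List.disjoint_of_nodup_append hL (List.mem_of_getLast? hz))

theorem List.Nodup.eq_of_isPrefix_of_isPrefix {p q L : List α} (hL : L.Nodup) (hp : p <+: L)
    (hq : q <+: L) (hlast : p.getLast? = q.getLast?) : p = q := by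
  rcases List.prefix_or_prefix_of_prefix hp hq with h | h
  · exact (hq.sublist.nodup hL).eq_of_isPrefix_of_getLast?_eq h hlast
  · exact ((hp.sublist.nodup hL).eq_of_isPrefix_of_getLast?_eq h hlast.symm).symm

theorem List.IsChain.rotate_closed {R : α → α → Prop} {s t : List α} {v a b : α}
    (hc : (s ++ v :: t).IsChain R) (ha : (s ++ v :: t).head? = some a)
    (hb : (s ++ v :: t).getLast? = some b) (hba : R b a) : (v :: (t ++ s ++ [v])).IsChain R := by
  have hb' : (v :: t).getLast? = some b := by simpa [List.getLast?_append] using hb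
  rcases s with _ | ⟨a', s⟩
  · obtain rfl : v = a := by simpa using ha
    rw [List.append_nil, ← List.cons_append]
    exact List.isChain_append.2 ⟨hc, List.isChain_singleton v, by simpa [hb'] using hba⟩
  · obtain rfl : a' = a := by simpa using ha
    obtain ⟨hs, hvt, hsv⟩ := List.isChain_append.1 hc
    rw [List.append_assoc, ← List.cons_append]
    refine List.isChain_append.2
      ⟨hvt, List.isChain_append.2 ⟨hs, List.isChain_singleton v, hsv⟩, ?_⟩
    simpa [hb'] using hba

end Lists

namespace Digr

theorem isPath_of_listArcs_subset {D : Digr V} {p : List V} (hne : p ≠ []) (hnd : p.Nodup)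
    (hverts : ∀ v ∈ p, v ∈ D.verts) (harcs : listArcs p ⊆ D.arcs) : D.IsPath p :=
  ⟨hne, hnd, hverts, (isChain_mem_listArcs p).imp fun _ _ h => harcs h⟩

omit [DecidableEq V] in
theorem IsCycle.exists_closed_walk {D : Digr V} {c : List V} (hc : D.IsCycle c) {v : V}
    (hv : v ∈ c) :
    ∃ q, (∀ x ∈ q, x ∈ c) ∧ (v :: (q ++ [v])).IsChain (fun a b => (a, b) ∈ D.arcs) := by
  obtain ⟨⟨-, -, -, hchain⟩, a, b, ha, hb, hba⟩ := hc
  obtain ⟨s, t, rfl⟩ := List.append_of_mem hv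
  refine ⟨t ++ s, fun x hx => ?_, ?_⟩
  · simp only [List.mem_append, List.mem_cons] at hx ⊢
    tauto
  · simpa only [List.append_assoc] using hchain.rotate_closed ha hb hba

theorem outNbr_eq_empty_iff {D : Digr V} {v : V} : D.outNbr v = ∅ ↔ ∀ y, (v, y) ∉ D.arcs := by
  simp [outNbr, Finset.eq_empty_iff_forall_notMem]

end Digr

namespace ICC

variable {k : ℕ} (P : Fin k → List V) (Q : Fin k → Fin k → List V) (tgt : Fin k → Fin k → V)
  (lastv : Fin k → V)

def entryTail (i j : Fin k) : List V := (P j).drop ((P j).idxOf (tgt i j))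

def branchTail (i j : Fin k) : List V := Q i j ++ entryTail P tgt i j

/-- The P-path from `lastv i` to `lastv j`. -/
def branch (i j : Fin k) : List V := lastv i :: branchTail P Q tgt i j

theorem entryTail_isSuffix (i j : Fin k) : entryTail P tgt i j <:+ P j := List.drop_suffix _ _

end ICC

open ICC

namespace IsICC

variable {k : ℕ} {D : Digr V} {P : Fin k → List V} {Q : Fin k → Fin k → List V}
  {tgt : Fin k → Fin k → V} {firstv lastv : Fin k → V}
  (h : IsICC D k P Q tgt firstv lastv)
include h

theorem lastv_mem_s11 (i : Fin k) : lastv i ∈ P i := List.mem_of_getLast? (h.last_eq i)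

theorem firstv_mem (i : Fin k) : firstv i ∈ P i := List.mem_of_mem_head? (h.head_eq i)

theorem eq_of_mem_P {v : V} {i j : Fin k} (hi : v ∈ P i) (hj : v ∈ P j) : i = j := by
  by_contra hij
  exact h.disj_P i j hij v hi hj

theorem lastv_injective_s11 : Function.Injective lastv := fun i j hij =>
  h.eq_of_mem_P (h.lastv_mem_s11 i) (hij ▸ h.lastv_mem_s11 j)

theorem nodup_P (i : Fin k) : (P i).Nodup := (h.path_P i).2.1

theorem eq_of_mem_Q {v : V} {i j i' j' : Fin k} (hij : i ≠ j) (hij' : i' ≠ j') (hv : v ∈ Q i j)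
    (hv' : v ∈ Q i' j') : i = i' ∧ j = j' := by
  by_contra hne
  exact h.disj_QQ i j i' j' hij hij' (fun he => hne (Prod.mk.inj he)) v hv hv'

theorem lastv_not_mem_Q (m : Fin k) {i j : Fin k} (hij : i ≠ j) : lastv m ∉ Q i j :=
  fun hm => h.disj_QP i j hij _ hm m (h.lastv_mem_s11 m)

theorem listArcs_P_subset (m : Fin k) : listArcs (P m) ⊆ D.arcs := by
  rw [h.arcs_eq]
  exact fun a ha => Finset.mem_union_left _ (Finset.mem_biUnion.2 ⟨m, Finset.mem_univ _, ha⟩)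

theorem listArcs_connector_subset {i j : Fin k} (hij : i ≠ j) :
    listArcs (lastv i :: (Q i j ++ [tgt i j])) ⊆ D.arcs := by
  rw [h.arcs_eq]
  exact fun a ha => Finset.mem_union_right _
    (Finset.mem_biUnion.2 ⟨(i, j), Finset.mem_univ _, by simpa [hij] using ha⟩)

theorem mem_arcs_cases {a : V × V} (ha : a ∈ D.arcs) :
    (∃ m, a ∈ listArcs (P m)) ∨ ∃ i j, i ≠ j ∧ a ∈ listArcs (lastv i :: (Q i j ++ [tgt i j])) := by
  rw [h.arcs_eq, Finset.mem_union, Finset.mem_biUnion, Finset.mem_biUnion] at ha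
  rcases ha with ⟨m, -, hm⟩ | ⟨⟨i, j⟩, -, hij⟩
  · exact Or.inl ⟨m, hm⟩
  · by_cases he : i = j
    · simp [he] at hij
    · exact Or.inr ⟨i, j, he, by simpa [he] using hij⟩

theorem mem_verts_cases {v : V} (hv : v ∈ D.verts) :
    (∃ m, v ∈ P m) ∨ ∃ i j, i ≠ j ∧ v ∈ Q i j := by
  rw [h.verts_eq, Finset.mem_union, Finset.mem_biUnion, Finset.mem_biUnion] at hv
  rcases hv with ⟨m, -, hm⟩ | ⟨⟨i, j⟩, -, hij⟩
  · exact Or.inl ⟨m, List.mem_toFinset.1 hm⟩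
  · by_cases he : i = j
    · simp [he] at hij
    · exact Or.inr ⟨i, j, he, by simpa [he] using hij⟩

theorem head?_entryTail {i j : Fin k} (hij : i ≠ j) :
    (entryTail P tgt i j).head? = some (tgt i j) := by
  rw [entryTail, List.head?_drop, List.getElem?_idxOf (h.tgt_mem i j hij)]

theorem entryTail_ne_nil {i j : Fin k} (hij : i ≠ j) : entryTail P tgt i j ≠ [] := by
  simp [← List.head?_eq_none_iff, h.head?_entryTail hij]

theorem getLast?_entryTail {i j : Fin k} (hij : i ≠ j) :
    (entryTail P tgt i j).getLast? = some (lastv j) := by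
  rw [entryTail, List.getLast?_drop, if_neg (not_le.2 (List.idxOf_lt_length_iff.2
    (h.tgt_mem i j hij))), h.last_eq j]

theorem nodup_entryTail (i j : Fin k) : (entryTail P tgt i j).Nodup :=
  (entryTail_isSuffix P tgt i j).sublist.nodup (h.nodup_P j)

theorem entryTail_eq_of_tgt_eq_firstv {i j : Fin k} (he : tgt i j = firstv j) :
    entryTail P tgt i j = P j := by
  obtain ⟨t, ht⟩ := List.head?_eq_some_iff.1 (h.head_eq j)
  rw [entryTail, he, ht, List.idxOf_cons_self, List.drop_zero]

theorem lastv_not_mem_branchTail {i j : Fin k} (hij : i ≠ j) :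
    lastv i ∉ branchTail P Q tgt i j := by
  rw [branchTail, List.mem_append, not_or]
  exact ⟨h.lastv_not_mem_Q i hij, fun hs =>
    hij (h.eq_of_mem_P (h.lastv_mem_s11 i) ((entryTail_isSuffix P tgt i j).subset hs))⟩

theorem nodup_branchTail {i j : Fin k} (hij : i ≠ j) : (branchTail P Q tgt i j).Nodup := by
  refine List.nodup_append.2 ⟨?_, h.nodup_entryTail i j, fun v hv w hw hvw => ?_⟩
  · exact ((h.conn_path i j hij).2.1.sublist (List.sublist_cons_self _ _)).sublist
      (List.sublist_append_left _ _)
  · exact h.disj_QP i j hij v hv j (hvw ▸ (entryTail_isSuffix P tgt i j).subset hw)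

theorem getLast?_branchTail {i j : Fin k} (hij : i ≠ j) :
    (branchTail P Q tgt i j).getLast? = some (lastv j) := by
  rw [branchTail, List.getLast?_append, h.getLast?_entryTail hij]
  rfl

theorem head?_branchTail {i j : Fin k} (hij : i ≠ j) :
    (branchTail P Q tgt i j).head? = (Q i j ++ [tgt i j]).head? := by
  rw [branchTail, List.head?_append, List.head?_append, h.head?_entryTail hij]
  rfl

theorem branchTail_ne_nil {i j : Fin k} (hij : i ≠ j) : branchTail P Q tgt i j ≠ [] := by
  simp [← List.getLast?_eq_none_iff, h.getLast?_branchTail hij]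

theorem eq_of_mem_branchTail {v : V} {i j j' : Fin k} (hij : i ≠ j) (hij' : i ≠ j')
    (hv : v ∈ branchTail P Q tgt i j) (hv' : v ∈ branchTail P Q tgt i j') : j = j' := by
  rw [branchTail, List.mem_append] at hv hv'
  rcases hv with hv | hv <;> rcases hv' with hv' | hv'
  · exact (h.eq_of_mem_Q hij hij' hv hv').2
  · exact absurd ((entryTail_isSuffix P tgt i j').subset hv') (h.disj_QP i j hij v hv j')
  · exact absurd ((entryTail_isSuffix P tgt i j).subset hv) (h.disj_QP i j' hij' v hv' j)
  · exact h.eq_of_mem_P ((entryTail_isSuffix P tgt i j).subset hv)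
      ((entryTail_isSuffix P tgt i j').subset hv')

theorem eq_of_lastv_mem_branchTail {m i j : Fin k} (hij : i ≠ j)
    (hm : lastv m ∈ branchTail P Q tgt i j) : m = j := by
  rw [branchTail, List.mem_append] at hm
  exact hm.elim (absurd · (h.lastv_not_mem_Q m hij))
    fun hm => h.eq_of_mem_P (h.lastv_mem_s11 m) ((entryTail_isSuffix P tgt i j).subset hm)

theorem lastv_not_mem_dropLast_branchTail (m : Fin k) {i j : Fin k} (hij : i ≠ j) :
    lastv m ∉ (branchTail P Q tgt i j).dropLast := by
  intro hm
  obtain rfl := h.eq_of_lastv_mem_branchTail hij (List.mem_of_mem_dropLast hm)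
  exact (h.nodup_branchTail hij).not_mem_dropLast_of_getLast? (h.getLast?_branchTail hij) hm

theorem nodup_branch {i j : Fin k} (hij : i ≠ j) : (branch P Q tgt lastv i j).Nodup :=
  List.nodup_cons.2 ⟨h.lastv_not_mem_branchTail hij, h.nodup_branchTail hij⟩

theorem getLast?_branch {i j : Fin k} (hij : i ≠ j) :
    (branch P Q tgt lastv i j).getLast? = some (lastv j) := by
  rw [branch, List.getLast?_cons, h.getLast?_branchTail hij]
  rfl

theorem connector_isPrefix_branch {i j : Fin k} (hij : i ≠ j) :
    lastv i :: (Q i j ++ [tgt i j]) <+: branch P Q tgt lastv i j := by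
  obtain ⟨r, hr⟩ := List.head?_eq_some_iff.1 (h.head?_entryTail hij)
  exact ⟨r, by simp [branch, branchTail, hr]⟩

theorem listArcs_branch_subset {i j : Fin k} (hij : i ≠ j) :
    listArcs (branch P Q tgt lastv i j) ⊆ D.arcs := by
  obtain ⟨r, hr⟩ := List.head?_eq_some_iff.1 (h.head?_entryTail hij)
  have hsplit : branch P Q tgt lastv i j = (lastv i :: Q i j) ++ tgt i j :: r := by
    simp [branch, branchTail, hr]
  rw [hsplit, listArcs_append_cons, ← hr]
  refine Finset.union_subset ?_
    ((listArcs_subset_of_isInfix (entryTail_isSuffix P tgt i j).isInfix).trans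
      (h.listArcs_P_subset j))
  simpa using h.listArcs_connector_subset hij

theorem mem_verts_of_mem_branch {i j : Fin k} (hij : i ≠ j) {v : V}
    (hv : v ∈ branch P Q tgt lastv i j) : v ∈ D.verts := by
  rcases List.mem_cons.1 hv with rfl | hv
  · exact (h.path_P i).2.2.1 _ (h.lastv_mem_s11 i)
  rcases List.mem_append.1 hv with hv | hv
  · exact (h.conn_path i j hij).2.2.1 v (by simp [hv])
  · exact (h.path_P j).2.2.1 v ((entryTail_isSuffix P tgt i j).subset hv)

theorem isPath_branch {i j : Fin k} (hij : i ≠ j) : D.IsPath (branch P Q tgt lastv i j) :=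
  Digr.isPath_of_listArcs_subset (List.cons_ne_nil _ _) (h.nodup_branch hij)
    (fun _ => h.mem_verts_of_mem_branch hij) (h.listArcs_branch_subset hij)

theorem exists_head?_branchTail_eq {i : Fin k} {w : V} (hw : (lastv i, w) ∈ D.arcs) :
    ∃ j, i ≠ j ∧ (branchTail P Q tgt i j).head? = some w := by
  rcases h.mem_arcs_cases hw with ⟨m, hm⟩ | ⟨i', j, hij, hc⟩
  · have hd := fst_mem_dropLast_of_mem_listArcs_s11 hm
    obtain rfl := h.eq_of_mem_P (List.mem_of_mem_dropLast hd) (h.lastv_mem_s11 i)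
    exact absurd hd ((h.nodup_P m).not_mem_dropLast_of_getLast? (h.last_eq m))
  · rcases mem_listArcs_cons.1 hc with ⟨he, hw⟩ | hc
    · obtain rfl := h.lastv_injective_s11 he
      exact ⟨j, hij, (h.head?_branchTail hij).trans hw⟩
    · have hQ := fst_mem_dropLast_of_mem_listArcs_s11 hc
      rw [List.dropLast_concat] at hQ
      exact absurd hQ (h.lastv_not_mem_Q i hij)

theorem mem_listArcs_connector_of_mem_Q {i j : Fin k} (hij : i ≠ j) {x y : V} (hx : x ∈ Q i j)
    (hxy : (x, y) ∈ D.arcs) : (x, y) ∈ listArcs (lastv i :: (Q i j ++ [tgt i j])) := by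
  rcases h.mem_arcs_cases hxy with ⟨m, hm⟩ | ⟨i', j', hij', hc⟩
  · exact absurd (fst_mem_of_mem_listArcs hm) (h.disj_QP i j hij x hx m)
  · have hd := fst_mem_dropLast_of_mem_listArcs_s11 hc
    rw [List.dropLast_cons_of_ne_nil (by simp), List.dropLast_concat, List.mem_cons] at hd
    rcases hd with rfl | hd
    · exact absurd hx (h.lastv_not_mem_Q i' hij)
    · obtain ⟨rfl, rfl⟩ := h.eq_of_mem_Q hij hij' hx hd
      exact hc

theorem mem_listArcs_P_of_ne_lastv {m : Fin k} {x y : V} (hx : x ∈ P m) (hxl : x ≠ lastv m)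
    (hxy : (x, y) ∈ D.arcs) : (x, y) ∈ listArcs (P m) := by
  rcases h.mem_arcs_cases hxy with ⟨m', hm⟩ | ⟨i, j, hij, hc⟩
  · obtain rfl := h.eq_of_mem_P (fst_mem_of_mem_listArcs hm) hx
    exact hm
  · have hd := fst_mem_dropLast_of_mem_listArcs_s11 hc
    rw [List.dropLast_cons_of_ne_nil (by simp), List.dropLast_concat, List.mem_cons] at hd
    rcases hd with rfl | hd
    · exact absurd (congrArg lastv (h.eq_of_mem_P (h.lastv_mem_s11 i) hx)) hxl
    · exact absurd hx (h.disj_QP i j hij x hd m)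

theorem mem_listArcs_branchTail_of_mem_dropLast {i j : Fin k} (hij : i ≠ j) {x y : V}
    (hx : x ∈ (branchTail P Q tgt i j).dropLast) (hxy : (x, y) ∈ D.arcs) :
    (x, y) ∈ listArcs (branchTail P Q tgt i j) := by
  rw [branchTail, List.dropLast_append_of_ne_nil (h.entryTail_ne_nil hij), List.mem_append] at hx
  rcases hx with hx | hx
  · have hc := listArcs_subset_of_isInfix (h.connector_isPrefix_branch hij).isInfix
      (h.mem_listArcs_connector_of_mem_Q hij hx hxy)
    rw [branch, mem_listArcs_cons] at hc
    exact hc.resolve_left fun he => h.lastv_not_mem_Q i hij (he.1 ▸ hx)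
  · have hxs := List.mem_of_mem_dropLast hx
    have hxl : x ≠ lastv j := fun he => (h.nodup_entryTail i j).not_mem_dropLast_of_getLast?
      (h.getLast?_entryTail hij) (he ▸ hx)
    have hP := h.mem_listArcs_P_of_ne_lastv ((entryTail_isSuffix P tgt i j).subset hxs) hxl hxy
    exact listArcs_subset_of_isInfix (List.suffix_append _ _).isInfix
      (mem_listArcs_of_isSuffix (h.nodup_P j) (entryTail_isSuffix P tgt i j) hxs hP)

theorem isPrefix_or_isPrefix_branchTail {i : Fin k} {q : List V}
    (hq : (lastv i :: q).IsChain (fun a b => (a, b) ∈ D.arcs)) (hne : q ≠ []) :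
    ∃ j, i ≠ j ∧ (q <+: branchTail P Q tgt i j ∨ branchTail P Q tgt i j <+: q) := by
  obtain ⟨w, r, rfl⟩ := List.exists_cons_of_ne_nil hne
  obtain ⟨hw, hr⟩ := List.isChain_cons_cons.1 hq
  obtain ⟨j, hij, hhead⟩ := h.exists_head?_branchTail_eq hw
  exact ⟨j, hij, hr.prefix_or_prefix_of_forced (h.nodup_branchTail hij)
    (fun x hx y hxy => h.mem_listArcs_branchTail_of_mem_dropLast hij hx hxy) hhead.symm⟩

theorem exists_tgt_eq_firstv (j : Fin k) : ∃ i, i ≠ j ∧ tgt i j = firstv j := by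
  obtain ⟨u, -, hu⟩ := h.indeg j
  rcases h.mem_arcs_cases hu with ⟨m, hm⟩ | ⟨i, j', hij, hc⟩
  · have ht := snd_mem_tail_of_mem_listArcs hm
    obtain rfl := h.eq_of_mem_P (List.mem_of_mem_tail ht) (h.firstv_mem j)
    have hnd := h.nodup_P m
    obtain ⟨t, ht'⟩ := List.head?_eq_some_iff.1 (h.head_eq m)
    rw [ht'] at hnd ht
    exact absurd ht (List.nodup_cons.1 hnd).1
  · have ht := snd_mem_tail_of_mem_listArcs hc
    rw [List.tail_cons, List.mem_append, List.mem_singleton] at ht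
    rcases ht with hQ | he
    · exact absurd (h.firstv_mem j) (h.disj_QP i j' hij _ hQ j)
    · obtain rfl := h.eq_of_mem_P (he ▸ h.tgt_mem i j' hij) (h.firstv_mem j)
      exact ⟨i, hij, he.symm⟩

theorem exists_ne (i : Fin k) : ∃ j, i ≠ j := by
  have := Fin.nontrivial_iff_two_le.2 h.two_le
  obtain ⟨j, hj⟩ := _root_.exists_ne i
  exact ⟨j, hj.symm⟩

def tree (i : Fin k) : Digr V where
  verts := (Finset.univ.erase i).biUnion fun j => (branch P Q tgt lastv i j).toFinset
  arcs := (Finset.univ.erase i).biUnion fun j => listArcs (branch P Q tgt lastv i j)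
  arcs_sub a ha := by
    obtain ⟨j, hj, ha⟩ := Finset.mem_biUnion.1 ha
    exact ⟨Finset.mem_biUnion.2 ⟨j, hj, List.mem_toFinset.2 (fst_mem_of_mem_listArcs ha)⟩,
      Finset.mem_biUnion.2 ⟨j, hj, List.mem_toFinset.2 (snd_mem_of_mem_listArcs ha)⟩⟩
  no_loops a ha := by
    obtain ⟨j, hj, ha⟩ := Finset.mem_biUnion.1 ha
    exact D.no_loops a (h.listArcs_branch_subset (Finset.ne_of_mem_erase hj).symm ha)

theorem mem_tree_verts {i : Fin k} {v : V} :
    v ∈ (h.tree i).verts ↔ ∃ j, i ≠ j ∧ v ∈ branch P Q tgt lastv i j := by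
  simp [tree, ne_comm]

theorem mem_tree_arcs {i : Fin k} {a : V × V} :
    a ∈ (h.tree i).arcs ↔ ∃ j, i ≠ j ∧ a ∈ listArcs (branch P Q tgt lastv i j) := by
  simp [tree, ne_comm]

theorem tree_sub (i : Fin k) : (h.tree i).Sub D := by
  refine ⟨fun v hv => ?_, fun a ha => ?_⟩
  · obtain ⟨j, hij, hv⟩ := h.mem_tree_verts.1 hv
    exact h.mem_verts_of_mem_branch hij hv
  · obtain ⟨j, hij, ha⟩ := h.mem_tree_arcs.1 ha
    exact h.listArcs_branch_subset hij ha

theorem isPath_tree_of_isPrefix {i j : Fin k} (hij : i ≠ j) {p : List V}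
    (hp : p <+: branch P Q tgt lastv i j) (hne : p ≠ []) : (h.tree i).IsPath p :=
  Digr.isPath_of_listArcs_subset hne (hp.sublist.nodup (h.nodup_branch hij))
    (fun _ hv => h.mem_tree_verts.2 ⟨j, hij, hp.subset hv⟩)
    (fun _ ha => h.mem_tree_arcs.2 ⟨j, hij, listArcs_subset_of_isInfix hp.isInfix ha⟩)

theorem lastv_not_mem_tree_arcs {i j : Fin k} (hij : i ≠ j) (y : V) :
    (lastv j, y) ∉ (h.tree i).arcs := by
  intro hy
  obtain ⟨j', hij', hy⟩ := h.mem_tree_arcs.1 hy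
  have hd := fst_mem_dropLast_of_mem_listArcs_s11 hy
  rw [branch, List.dropLast_cons_of_ne_nil (h.branchTail_ne_nil hij'), List.mem_cons] at hd
  rcases hd with he | hd
  · exact hij (h.lastv_injective_s11 he).symm
  · exact h.lastv_not_mem_dropLast_branchTail j hij' hd

theorem exists_isPrefix_branch_of_isPath {i : Fin k} {p : List V} (hp : (h.tree i).IsPath p)
    (hhead : p.head? = some (lastv i)) : ∃ j, i ≠ j ∧ p <+: branch P Q tgt lastv i j := by
  obtain ⟨q, rfl⟩ := List.head?_eq_some_iff.1 hhead
  rcases eq_or_ne q [] with rfl | hq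
  · obtain ⟨j, hij⟩ := h.exists_ne i
    exact ⟨j, hij, List.cons_prefix_cons.2 ⟨rfl, List.nil_prefix⟩⟩
  have hchain := hp.2.2.2
  obtain ⟨j, hij, hpre | ⟨r, rfl⟩⟩ :=
    h.isPrefix_or_isPrefix_branchTail (hchain.imp fun _ _ hab => (h.tree_sub i).2 hab) hq
  · exact ⟨j, hij, List.cons_prefix_cons.2 ⟨rfl, hpre⟩⟩
  refine ⟨j, hij, ?_⟩
  rcases r with _ | ⟨c, r⟩
  · rw [List.append_nil]
    exact List.prefix_refl _
  rw [← List.cons_append] at hchain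
  exact absurd ((List.isChain_append.1 hchain).2.2 (lastv j) (h.getLast?_branch hij) c rfl)
    (h.lastv_not_mem_tree_arcs hij c)

theorem tree_isOutArb (i : Fin k) : (h.tree i).IsOutArb (lastv i) := by
  obtain ⟨j₀, hij₀⟩ := h.exists_ne i
  refine ⟨h.mem_tree_verts.2 ⟨j₀, hij₀, List.mem_cons_self⟩, fun v hv => ?_⟩
  obtain ⟨j, hij, hvj⟩ := h.mem_tree_verts.1 hv
  obtain ⟨s, t, hst⟩ := List.append_of_mem hvj
  have hpre : s ++ [v] <+: branch P Q tgt lastv i j := ⟨t, by simp [hst]⟩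
  have hhead : (s ++ [v]).head? = some (lastv i) := by
    rcases s with _ | ⟨a, s⟩ <;> simp_all [branch]
  refine ⟨s ++ [v], ⟨h.isPath_tree_of_isPrefix hij hpre (by simp), hhead, by simp⟩, ?_⟩
  rintro p ⟨hp, hph, hpl⟩
  obtain ⟨j', hij', hpj'⟩ := h.exists_isPrefix_branch_of_isPath hp hph
  by_cases hvi : v = lastv i
  · subst hvi
    have hroot : ∀ j, [lastv i] <+: branch P Q tgt lastv i j := fun j =>
      List.cons_prefix_cons.2 ⟨rfl, List.nil_prefix⟩
    rw [(h.nodup_branch hij').eq_of_isPrefix_of_isPrefix hpj' (hroot j') (by simp [hpl]),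
      (h.nodup_branch hij).eq_of_isPrefix_of_isPrefix hpre (hroot j) (by simp)]
  · have hv' : v ∈ branchTail P Q tgt i j' :=
      (List.mem_cons.1 (hpj'.subset (List.mem_of_getLast? hpl))).resolve_left hvi
    obtain rfl := h.eq_of_mem_branchTail hij' hij hv' ((List.mem_cons.1 hvj).resolve_left hvi)
    exact (h.nodup_branch hij).eq_of_isPrefix_of_isPrefix hpj' hpre (by simp [hpl])

theorem tree_leaves (i : Fin k) :
    (h.tree i).leaves = (Finset.univ.image lastv).erase (lastv i) := by
  ext v
  simp only [Digr.leaves, Finset.mem_filter, Digr.outNbr_eq_empty_iff, Finset.mem_erase,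
    Finset.mem_image, Finset.mem_univ, true_and]
  constructor
  · rintro ⟨hv, hout⟩
    obtain ⟨j, hij, hvj⟩ := h.mem_tree_verts.1 hv
    have hlast : some v = (branch P Q tgt lastv i j).getLast? := by
      by_contra hne
      obtain ⟨y, hy⟩ :=
        exists_mem_listArcs_of_mem_dropLast (List.mem_dropLast_of_mem_of_ne_getLast? hvj hne)
      exact hout y (h.mem_tree_arcs.2 ⟨j, hij, hy⟩)
    obtain rfl := Option.some_inj.1 (hlast.trans (h.getLast?_branch hij))
    exact ⟨fun he => hij (h.lastv_injective_s11 he).symm, j, rfl⟩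
  · rintro ⟨hne, j, rfl⟩
    have hij : i ≠ j := fun he => hne (he ▸ rfl)
    exact ⟨h.mem_tree_verts.2 ⟨j, hij, List.mem_of_getLast? (h.getLast?_branch hij)⟩,
      h.lastv_not_mem_tree_arcs hij⟩

theorem exists_mem_tree_verts {v : V} (hv : v ∈ D.verts) : ∃ i, v ∈ (h.tree i).verts := by
  rcases h.mem_verts_cases hv with ⟨m, hm⟩ | ⟨i, j, hij, hQ⟩
  · obtain ⟨i, him, he⟩ := h.exists_tgt_eq_firstv m
    refine ⟨i, h.mem_tree_verts.2 ⟨m, him, ?_⟩⟩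
    rw [branch, branchTail, h.entryTail_eq_of_tgt_eq_firstv he]
    exact List.mem_cons_of_mem _ (List.mem_append_right _ hm)
  · exact ⟨i, h.mem_tree_verts.2 ⟨j, hij, List.mem_cons_of_mem _ (List.mem_append_left _ hQ)⟩⟩

theorem exists_mem_tree_arcs {a : V × V} (ha : a ∈ D.arcs) : ∃ i, a ∈ (h.tree i).arcs := by
  rcases h.mem_arcs_cases ha with ⟨m, hm⟩ | ⟨i, j, hij, hc⟩
  · obtain ⟨i, him, he⟩ := h.exists_tgt_eq_firstv m
    refine ⟨i, h.mem_tree_arcs.2 ⟨m, him, listArcs_subset_of_isInfix ?_ hm⟩⟩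
    rw [branch, branchTail, h.entryTail_eq_of_tgt_eq_firstv he]
    exact ((List.suffix_append _ _).trans (List.suffix_cons _ _)).isInfix
  · exact ⟨i, h.mem_tree_arcs.2 ⟨j, hij,
      listArcs_subset_of_isInfix (h.connector_isPrefix_branch hij).isInfix hc⟩⟩

theorem isPPathFromTo_branch {i j : Fin k} (hij : i ≠ j) :
    D.IsPPathFromTo (Finset.univ.image lastv) (lastv i) (lastv j) (branch P Q tgt lastv i j) := by
  refine ⟨h.isPath_branch hij, rfl, h.getLast?_branch hij, Finset.mem_image_of_mem _
    (Finset.mem_univ i), Finset.mem_image_of_mem _ (Finset.mem_univ j),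
    fun he => hij (h.lastv_injective_s11 he), fun v hv hvI => ?_⟩
  obtain ⟨m, -, rfl⟩ := Finset.mem_image.1 hvI
  exact h.lastv_not_mem_dropLast_branchTail m hij hv

theorem eq_branch_of_isPPathFromTo {i j : Fin k} (hij : i ≠ j) {p : List V}
    (hp : D.IsPPathFromTo (Finset.univ.image lastv) (lastv i) (lastv j) p) :
    p = branch P Q tgt lastv i j := by
  obtain ⟨⟨-, hnd, -, hchain⟩, hhead, hlast, -, -, hne, hint⟩ := hp
  obtain ⟨q, rfl⟩ := List.head?_eq_some_iff.1 hhead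
  have hq : q ≠ [] := by
    rintro rfl
    exact hne (by simpa using hlast)
  have hqlast : q.getLast? = some (lastv j) := by
    obtain ⟨w, r, rfl⟩ := List.exists_cons_of_ne_nil hq
    rwa [List.getLast?_cons_cons] at hlast
  have hqnd : q.Nodup := (List.nodup_cons.1 hnd).2
  have hint' (m : Fin k) : lastv m ∉ q.dropLast := fun hm =>
    hint _ (by simpa using hm) (Finset.mem_image_of_mem _ (Finset.mem_univ m))
  obtain ⟨j', hij', hpre | hpre⟩ := h.isPrefix_or_isPrefix_branchTail hchain hq
  · obtain rfl := h.eq_of_lastv_mem_branchTail hij' (hpre.subset (List.mem_of_getLast? hqlast))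
    rw [branch, (h.nodup_branchTail hij).eq_of_isPrefix_of_getLast?_eq hpre
      (hqlast.trans (h.getLast?_branchTail hij).symm)]
  · have hj'q : some (lastv j') = q.getLast? := by
      by_contra hne'
      exact hint' j' (List.mem_dropLast_of_mem_of_ne_getLast?
        (hpre.subset (List.mem_of_getLast? (h.getLast?_branchTail hij'))) hne')
    obtain rfl := h.lastv_injective_s11 (Option.some_inj.1 (hj'q.trans hqlast))
    rw [branch, hqnd.eq_of_isPrefix_of_getLast?_eq hpre
      ((h.getLast?_branchTail hij').trans hqlast.symm)]

theorem card_inter_ne_one {c : List V} (hc : D.IsCycle c) :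
    (c.toFinset ∩ Finset.univ.image lastv).card ≠ 1 := by
  intro h1
  obtain ⟨x, hx⟩ := Finset.card_eq_one.1 h1
  have hxmem : x ∈ c.toFinset ∩ Finset.univ.image lastv := hx ▸ Finset.mem_singleton_self x
  simp only [Finset.mem_inter, List.mem_toFinset, Finset.mem_image, Finset.mem_univ,
    true_and] at hxmem
  obtain ⟨hxc, i, rfl⟩ := hxmem
  have honly (m : Fin k) (hm : lastv m ∈ c) : m = i :=
    h.lastv_injective_s11 <| Finset.mem_singleton.1 <| hx ▸ Finset.mem_inter.2
      ⟨List.mem_toFinset.2 hm, Finset.mem_image_of_mem _ (Finset.mem_univ m)⟩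
  obtain ⟨q, hqc, hchain⟩ := hc.exists_closed_walk hxc
  obtain ⟨j, hij, hpre | hpre⟩ := h.isPrefix_or_isPrefix_branchTail hchain (by simp)
  · exact h.lastv_not_mem_branchTail hij (hpre.subset (by simp))
  · have hj := hpre.subset (List.mem_of_getLast? (h.getLast?_branchTail hij))
    rw [List.mem_append, List.mem_singleton] at hj
    rcases hj with hj | hj
    · exact hij (honly j (hqc _ hj)).symm
    · exact hij (h.lastv_injective_s11 hj).symm

end IsICC

theorem Digr.isGIC_of_injective {ι : Type} [Fintype ι] [Nonempty ι] {D : Digr V} {f : ι → V}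
    (hf : Function.Injective f) (T : ι → Digr V)
    (htree : ∀ i, (T i).Sub D ∧ (T i).IsOutArb (f i) ∧
      (T i).leaves = (Finset.univ.image f).erase (f i))
    (hverts : ∀ v ∈ D.verts, ∃ i, v ∈ (T i).verts) (harcs : ∀ a ∈ D.arcs, ∃ i, a ∈ (T i).arcs)
    (hcycle : ∀ c, D.IsCycle c → (c.toFinset ∩ Finset.univ.image f).card ≠ 1)
    (hpath : ∀ i j, i ≠ j → ∃! p, D.IsPPathFromTo (Finset.univ.image f) (f i) (f j) p) :
    D.IsGIC (Finset.univ.image f) (fun v => T (Function.invFun f v)) := by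
  have hT (i : ι) : T (Function.invFun f (f i)) = T i := by rw [Function.leftInverse_invFun hf i]
  simp only [Digr.IsGIC, Finset.forall_mem_image, Finset.mem_univ, forall_const, hT]
  refine ⟨Finset.image_subset_iff.2 fun i _ => (htree i).1.1 (htree i).2.1.1, htree, ?_, ?_, hcycle,
    fun i j hij => hpath i j fun he => hij (he ▸ rfl)⟩
  · ext v
    simp only [Finset.mem_biUnion, Finset.mem_image, Finset.mem_univ, true_and,
      exists_exists_eq_and, hT]
    exact ⟨hverts v, fun ⟨i, hv⟩ => (htree i).1.1 hv⟩
  · ext a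
    simp only [Finset.mem_biUnion, Finset.mem_image, Finset.mem_univ, true_and,
      exists_exists_eq_and, hT]
    exact ⟨harcs a, fun ⟨i, ha⟩ => (htree i).1.2 ha⟩

/-- Theorem 2: every ICC digraph is a `k`-GIC digraph with inner vertex set the set of
last vertices of the `k` disjoint paths. -/
theorem stmt11 (D : Digr V) (k : ℕ) (P : Fin k → List V)
    (Q : Fin k → Fin k → List V) (tgt : Fin k → Fin k → V)
    (firstv lastv : Fin k → V)
    (hICC : IsICC D k P Q tgt firstv lastv) :
    (Finset.univ.image lastv).card = k ∧
    ∃ T : V → Digr V, D.IsGIC (Finset.univ.image lastv) T := by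
  have : Nonempty (Fin k) := ⟨⟨0, by linarith [hICC.two_le]⟩⟩
  refine ⟨by simp [Finset.card_image_of_injective _ hICC.lastv_injective_s11], _,
    Digr.isGIC_of_injective hICC.lastv_injective_s11 hICC.tree
      (fun i => ⟨hICC.tree_sub i, hICC.tree_isOutArb i, hICC.tree_leaves i⟩)
      (fun _ => hICC.exists_mem_tree_verts) (fun _ => hICC.exists_mem_tree_arcs)
      (fun _ => hICC.card_inter_ne_one)
      (fun _ _ hij => ⟨_, hICC.isPPathFromTo_branch hij,
        fun _ => hICC.eq_branch_of_isPPathFromTo hij⟩)⟩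
end
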